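/- arXiv:2405.03422 — 2 statements merged into one kernel-verified Lean document; each statement's English description precedes it below -/
import Mathlib

section
/- Let 0 ≤ l < k ≤ n and λ = (λ_1,…,λ_n) ∈ Γ̃_k with λ_1 ≥ λ_2 ≥ ⋯ ≥ λ_n, and set η = (η_1,…,η_n) with η_i = Σ_{j≠i} λ_j. Then the derivatives of σ_k(η)/σ_l(η) with respect to the η-variables are nonincreasing in the index: ∂[σ_k(η)/σ_l(η)]/∂η_1 ≥ ∂[σ_k(η)/σ_l(η)]/∂η_2 ≥ ⋯ ≥ ∂[σ_k(η)/σ_l(η)]/∂η_n, whereas the derivatives with respect to the λ-variables are nondecreasing: ∂[σ_k(η)/σ_l(η)]/∂λ_1 ≤ ∂[σ_k(η)/σ_l(η)]/∂λ_2 ≤ ⋯ ≤ ∂[σ_k(η)/σ_l(η)]/∂λ_n. -/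
open Finset MeasureTheory Metric Set Bornology Matrix

/-- The `k`-th elementary symmetric function of `x ∈ ℝⁿ`. -/
noncomputable def esymm (n k : ℕ) (x : Fin n → ℝ) : ℝ :=
  ∑ s ∈ Finset.powersetCard k (Finset.univ : Finset (Fin n)), ∏ i ∈ s, x i

/-- The Gårding cone `Γ_k = {λ : σ_i(λ) > 0 for 1 ≤ i ≤ k}`. -/
def GammaCone (n k : ℕ) : Set (Fin n → ℝ) :=
  {x | ∀ i : ℕ, 1 ≤ i → i ≤ k → 0 < esymm n i x}

/-- `η_i(κ) = ∑_{j ≠ i} κ_j`. -/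
def etaVec {n : ℕ} (x : Fin n → ℝ) : Fin n → ℝ :=
  fun i => ∑ j ∈ Finset.univ.erase i, x j

/-- The cone `Γ̃_k = {κ : σ_i(η(κ)) > 0 for 1 ≤ i ≤ k}`. -/
def GammaTilde (n k : ℕ) : Set (Fin n → ℝ) := {x | etaVec x ∈ GammaCone n k}

/-- `σ_k(x|i)`: the `k`-th elementary symmetric function of `x` with the `i`-th entry removed. -/
noncomputable def esymmRemoved (n k : ℕ) (i : Fin n) (x : Fin n → ℝ) : ℝ :=
  ∑ s ∈ Finset.powersetCard k ((Finset.univ : Finset (Fin n)).erase i), ∏ j ∈ s, x j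

/-!
Put `a = η_i ≤ η_j = b` for `i < j` and let `M` be the remaining entries of `η`. Moving along
`e_i - e_j` keeps `a + b` fixed, so it changes `σ_m(η)` only through the term `a b σ_{m-2}(M)`;
hence `(∂_i - ∂_j)(σ_k/σ_l) = (b - a) (σ_{k-2}(M) σ_l(η) - σ_k(η) σ_{l-2}(M)) / σ_l(η)²`.
The bracket is nonnegative because deleting an entry of a vector in the Gårding cone `Γ_m` leaves
one in `Γ_{m-1}`, and on `Γ_m` the ratios `σ_{r+1}/σ_r` decrease; both follow from Newton's
inequality `σ_r σ_{r+2} ≤ σ_{r+1}²`, proved from Rolle's theorem (the derivative of `∏ (X - x_i)`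
has only real roots) and inversion of the roots. Finally `λ ↦ η` is linear and maps `e_j - e_i`
to `e_i - e_j`, which turns the `η`-statement into the `λ`-statement.
-/

namespace Multiset

section CommSemiring

variable {R : Type*} [CommSemiring R]

@[simp]
theorem esymm_zero (s : Multiset R) : s.esymm 0 = 1 := by
  simp [esymm, powersetCard_zero_left]

theorem esymm_one (s : Multiset R) : s.esymm 1 = s.sum := by
  simp [esymm, powersetCard_one, map_map]

theorem esymm_cons_succ (a : R) (s : Multiset R) (m : ℕ) :
    (a ::ₘ s).esymm (m + 1) = a * s.esymm m + s.esymm (m + 1) := by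
  simp [esymm, powersetCard_cons, sum_map_mul_left, add_comm]

theorem esymm_eq_zero_of_card_lt {s : Multiset R} {m : ℕ} (h : card s < m) : s.esymm m = 0 := by
  simp [esymm, powersetCard_eq_empty m h]

theorem esymm_card (s : Multiset R) : s.esymm (card s) = s.prod := by
  simp [esymm, powersetCard_self]

theorem sq_sum_eq_sum_sq_add_two_mul_esymm (s : Multiset R) :
    s.sum ^ 2 = (s.map (· ^ 2)).sum + 2 * s.esymm 2 := by
  induction s using Multiset.induction with
  | empty => simp [esymm_eq_zero_of_card_lt (s := (0 : Multiset R)) (m := 2) (by simp)]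
  | cons a s ih =>
    rw [sum_cons, map_cons, sum_cons, esymm_cons_succ, esymm_one, add_sq, ih]
    ring

end CommSemiring

-- the coefficient of `a * b` in `σ_m(a ::ₘ b ::ₘ s)`
def esymmTwoBelow {R : Type*} [CommSemiring R] (s : Multiset R) : ℕ → R
  | 0 | 1 => 0
  | m + 2 => s.esymm m

theorem esymm_cons_cons_sub {R : Type*} [CommRing R] (s : Multiset R) {a b a' b' : R}
    (hab : a + b = a' + b') (m : ℕ) :
    (a ::ₘ b ::ₘ s).esymm m - (a' ::ₘ b' ::ₘ s).esymm m =
      (a * b - a' * b') * s.esymmTwoBelow m := by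
  match m with
  | 0 => simp [esymmTwoBelow]
  | 1 =>
    simp only [esymm_one, sum_cons, esymmTwoBelow]
    linear_combination hab
  | m + 2 =>
    simp only [esymm_cons_succ, esymmTwoBelow]
    linear_combination s.esymm (m + 1) * hab

theorem esymm_eq_prod_mul_esymm_inv {K : Type*} [Field K] {s : Multiset K} (hs : (0 : K) ∉ s)
    {i j : ℕ} (hij : i + j = card s) : s.esymm i = s.prod * (s.map (·⁻¹)).esymm j := by
  induction s using Multiset.induction generalizing i j with
  | empty =>
    obtain ⟨rfl, rfl⟩ : i = 0 ∧ j = 0 := by simpa using hij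
    simp
  | cons a s ih =>
    have ha : a ≠ 0 := fun h => hs (h ▸ mem_cons_self a s)
    have hs' : (0 : K) ∉ s := fun h => hs (mem_cons_of_mem h)
    rw [card_cons] at hij
    rcases i with _ | i
    · obtain rfl : j = card ((a ::ₘ s).map (·⁻¹)) := by simp; omega
      rw [esymm_card, prod_map_inv, map_id', esymm_zero, mul_inv_cancel₀ (prod_ne_zero hs)]
    rcases j with _ | j
    · rw [map_cons, esymm_zero, mul_one, ← esymm_card, card_cons, ← hij]
    rw [map_cons, esymm_cons_succ, esymm_cons_succ, ih hs' (by omega : i + (j + 1) = card s),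
      ih hs' (by omega : i + 1 + j = card s), prod_cons]
    field_simp
    ring

theorem sq_sum_le_card_mul_sum_sq (s : Multiset ℝ) :
    s.sum ^ 2 ≤ card s * (s.map (· ^ 2)).sum := by
  have h := _root_.sq_sum_le_card_mul_sum_sq (s := s.toEnumFinset) (f := Prod.fst)
  have hsum (g : ℝ → ℝ) : ∑ x ∈ s.toEnumFinset, g x.1 = (s.map g).sum := by
    rw [Finset.sum, ← map_toEnumFinset_fst s, map_map, map_toEnumFinset_fst]
    rfl
  rwa [hsum (fun x => x), hsum (· ^ 2), card_toEnumFinset, map_id'] at h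

theorem newton_inequality_zero (s : Multiset ℝ) :
    2 * card s * s.esymm 2 ≤ (card s - 1) * s.esymm 1 ^ 2 := by
  have hcs := sq_sum_le_card_mul_sum_sq s
  have hsq := sq_sum_eq_sum_sq_add_two_mul_esymm s
  rw [esymm_one]
  nlinarith

theorem newton_inequality_of_card_eq {s : Multiset ℝ} {m : ℕ} (hs : card s = m + 2) :
    (m + 2) * (card s - m) * (s.esymm m * s.esymm (m + 2)) ≤
      (m + 1) * (card s - m - 1) * s.esymm (m + 1) ^ 2 := by
  have hcard : (card s : ℝ) = m + 2 := by exact_mod_cast hs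
  rw [hcard]
  by_cases h0 : (0 : ℝ) ∈ s
  · rw [← hs, esymm_card, prod_eq_zero h0]
    nlinarith [sq_nonneg (s.esymm (m + 1))]
  -- inverting the roots turns `σ_m, σ_{m+1}, σ_{m+2}` into `s.prod` times `σ_2, σ_1, σ_0`
  set y := s.map (·⁻¹)
  rw [esymm_eq_prod_mul_esymm_inv h0 (i := m) (j := 2) (by omega),
    esymm_eq_prod_mul_esymm_inv h0 (i := m + 1) (j := 1) (by omega),
    esymm_eq_prod_mul_esymm_inv h0 (i := m + 2) (j := 0) (by omega), esymm_zero]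
  have hy := newton_inequality_zero y
  rw [card_map, hcard] at hy
  nlinarith [mul_le_mul_of_nonneg_left hy (sq_nonneg s.prod)]

open Polynomial in
theorem exists_esymm_derivative {s : Multiset ℝ} {N : ℕ} (hs : card s = N + 1) :
    ∃ t : Multiset ℝ, card t = N ∧
      ∀ j ≤ N, (N + 1 : ℝ) * t.esymm j = (N + 1 - j) * s.esymm j := by
  set q : ℝ[X] := (s.map fun a => X - C a).prod
  have hq_deg : q.natDegree = N + 1 := by rw [natDegree_multiset_prod_X_sub_C_eq_card, hs]
  have hq_roots : q.roots = s := roots_multiset_prod_X_sub_C s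
  have hq_coeff (k : ℕ) (hk : k ≤ N + 1) :
      q.coeff k = (-1) ^ (N + 1 - k) * s.esymm (N + 1 - k) := by
    rw [prod_X_sub_C_coeff s (hs ▸ hk), hs]
  -- Rolle: between consecutive roots of `q` lies a root of `q'`
  have hrolle : card s ≤ card (derivative q).roots + 1 := hq_roots ▸ card_roots_le_derivative q
  have hdeg_le : (derivative q).natDegree ≤ N := by simp [hq_deg]
  have hroots_le := card_roots' (derivative q)
  have hdeg : (derivative q).natDegree = N := by omega
  have hcard : card (derivative q).roots = (derivative q).natDegree := by omega
  refine ⟨(derivative q).roots, by omega, fun j hj => ?_⟩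
  have hlead : (derivative q).leadingCoeff = N + 1 := by
    rw [leadingCoeff, hdeg, coeff_derivative, hq_coeff _ le_rfl]
    simp
  have hvieta := coeff_eq_esymm_roots_of_card hcard (k := N - j) (by omega)
  rw [coeff_derivative, hq_coeff _ (by omega), hlead, hdeg, show N + 1 - (N - j + 1) = j by omega,
    show N - (N - j) = j by omega, Nat.cast_sub hj] at hvieta
  refine mul_left_cancel₀ (pow_ne_zero j (neg_ne_zero.mpr one_ne_zero)) ?_
  linear_combination -hvieta

-- Newton's inequality `E_m E_{m+2} ≤ E_{m+1}²` for `E_r = σ_r / (card s).choose r`,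
-- with the binomial coefficients cleared
theorem newton_inequality (s : Multiset ℝ) (m : ℕ) :
    (m + 2) * (card s - m) * (s.esymm m * s.esymm (m + 2)) ≤
      (m + 1) * (card s - m - 1) * s.esymm (m + 1) ^ 2 := by
  rcases lt_or_ge (card s) (m + 2) with hlt | hge
  · rw [esymm_eq_zero_of_card_lt hlt, mul_zero, mul_zero]
    rcases Nat.lt_succ_iff_lt_or_eq.mp hlt with hlt | heq
    · simp [esymm_eq_zero_of_card_lt hlt]
    · simp [heq]
  obtain ⟨N, hN⟩ := Nat.exists_eq_add_of_le hge
  induction N generalizing s with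
  | zero => exact newton_inequality_of_card_eq hN
  | succ N ih =>
    -- `σ_r(t) = (card s - r) / card s * σ_r(s)`: the inequality for `t` rescales to that for `s`
    obtain ⟨t, ht, hts⟩ := exists_esymm_derivative (N := m + 2 + N) (by omega)
    have hnewton := ih t (by omega) ht
    have e0 := hts m (by omega)
    have e1 := hts (m + 1) (by omega)
    have e2 := hts (m + 2) (by omega)
    rw [ht] at hnewton
    rw [hN]
    push_cast at hnewton e0 e1 e2 ⊢
    have hpos : (0 : ℝ) < (N + 2) * (N + 1) := by positivity
    refine le_of_mul_le_mul_left ?_ hpos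
    linear_combination (↑m + 2 + ↑N + 1) ^ 2 * hnewton
      - (m + 2) * (N + 2) * (m + N + 3) * t.esymm (m + 2) * e0
      - (m + 2) * (N + 2) * (N + 3) * s.esymm m * e2
      + (m + 1) * (N + 1) * ((m + N + 3) * t.esymm (m + 1) + (N + 2) * s.esymm (m + 1)) * e1

theorem esymm_mul_esymm_le_sq (s : Multiset ℝ) (m : ℕ) :
    s.esymm m * s.esymm (m + 2) ≤ s.esymm (m + 1) ^ 2 := by
  rcases le_or_gt (s.esymm m * s.esymm (m + 2)) 0 with h | h
  · exact h.trans (sq_nonneg _)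
  have hcard : (m : ℝ) + 2 ≤ card s := by
    by_contra! hlt
    rw [esymm_eq_zero_of_card_lt (m := m + 2) (by exact_mod_cast hlt), mul_zero] at h
    exact h.false
  have hnewton := newton_inequality s m
  have hc : 0 ≤ ((m : ℝ) + 1) * (card s - m - 1) := by nlinarith
  have hcd : ((m : ℝ) + 1) * (card s - m - 1) < (m + 2) * (card s - m) := by nlinarith
  by_contra! hlt
  nlinarith [mul_le_mul_of_nonneg_left hlt.le hc, mul_lt_mul_of_pos_right hcd h]

section GardingCone

variable {s : Multiset ℝ} {a b : ℝ} {k p q : ℕ}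

theorem esymm_pos_of_cons (h : ∀ m ≤ k + 1, 0 < (a ::ₘ s).esymm m) : ∀ m ≤ k, 0 < s.esymm m := by
  intro m hm
  induction m with
  | zero => simp
  | succ m ih =>
    -- otherwise the two cone inequalities force `σ_m(s) σ_{m+2}(s) > σ_{m+1}(s)²`
    by_contra! hneg
    have h1 := h (m + 1) (by omega)
    have h2 := h (m + 2) (by omega)
    rw [esymm_cons_succ] at h1 h2
    nlinarith [ih (by omega), esymm_mul_esymm_le_sq s m]

theorem esymm_succ_mul_le (h : ∀ m ≤ q, 0 < s.esymm m) (hpq : p ≤ q) :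
    s.esymm (q + 1) * s.esymm p ≤ s.esymm q * s.esymm (p + 1) := by
  induction q, hpq using Nat.le_induction with
  | base => rw [mul_comm]
  | succ q hpq ih =>
    have hq := h q (by omega)
    have hnewton := mul_le_mul_of_nonneg_right (esymm_mul_esymm_le_sq s q) (h p (by omega)).le
    have hih := mul_le_mul_of_nonneg_left (ih fun m hm => h m (by omega)) (h (q + 1) le_rfl).le
    refine le_of_mul_le_mul_left ?_ hq
    nlinarith

theorem esymm_cons_succ_mul_le (h : ∀ m ≤ q, 0 < s.esymm m) (hpq : p ≤ q) :
    (a ::ₘ s).esymm (q + 1) * s.esymm p ≤ (a ::ₘ s).esymm (p + 1) * s.esymm q := by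
  rw [esymm_cons_succ, esymm_cons_succ]
  linarith [esymm_succ_mul_le h hpq]

theorem esymm_cons_cons_mul_le (h : ∀ m ≤ q + 2, 0 < (a ::ₘ b ::ₘ s).esymm m) (hpq : p ≤ q) :
    (a ::ₘ b ::ₘ s).esymm (q + 2) * s.esymm p ≤ (a ::ₘ b ::ₘ s).esymm (p + 2) * s.esymm q := by
  have hb : ∀ m ≤ q + 1, 0 < (b ::ₘ s).esymm m := esymm_pos_of_cons h
  have hs : ∀ m ≤ q, 0 < s.esymm m := esymm_pos_of_cons hb
  have h1 := esymm_cons_succ_mul_le (a := a) hb (Nat.succ_le_succ hpq)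
  have h2 := esymm_cons_succ_mul_le (a := b) hs hpq
  have hP := hb (p + 1) (by omega)
  refine le_of_mul_le_mul_left ?_ hP
  nlinarith [mul_le_mul_of_nonneg_right h1 (hs p (by omega)).le,
    mul_le_mul_of_nonneg_left h2 (h (p + 2) (by omega)).le]

theorem esymm_mul_esymmTwoBelow_le {l : ℕ} (h : ∀ m ≤ k, 0 < (a ::ₘ b ::ₘ s).esymm m)
    (hlk : l ≤ k) :
    (a ::ₘ b ::ₘ s).esymm k * s.esymmTwoBelow l ≤ (a ::ₘ b ::ₘ s).esymm l * s.esymmTwoBelow k := by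
  match l, k with
  | 0, k | 1, k =>
    have hk : 0 ≤ s.esymmTwoBelow k := by
      match k with
      | 0 | 1 => simp [esymmTwoBelow]
      | q + 2 => exact (esymm_pos_of_cons (esymm_pos_of_cons h) q le_rfl).le
    simpa [esymmTwoBelow] using mul_nonneg (h _ hlk).le hk
  | p + 2, q + 2 => exact esymm_cons_cons_mul_le h (by omega)

end GardingCone

end Multiset

theorem Finset.univ_val_map_eq_cons_cons {ι α : Type*} [Fintype ι] [DecidableEq ι] (f : ι → α)
    {i j : ι} (hij : i ≠ j) :
    (univ : Finset ι).val.map f = f i ::ₘ f j ::ₘ ((univ.erase i).erase j).val.map f := by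
  rw [← Multiset.map_cons, ← Multiset.map_cons, Finset.erase_val, Finset.erase_val,
    Multiset.cons_erase ((Multiset.mem_erase_of_ne hij.symm).2 (mem_univ j)),
    Multiset.cons_erase (mem_univ i)]

section EsymmOnFin

variable {n : ℕ}

theorem esymm_eq_esymm_map (m : ℕ) (y : Fin n → ℝ) : esymm n m y = (univ.val.map y).esymm m :=
  (Finset.esymm_map_val y univ m).symm

theorem differentiable_esymm (m : ℕ) : Differentiable ℝ (esymm n m) := by
  unfold esymm
  fun_prop

theorem esymm_add_smul_single_sub_single {i j : Fin n} (hij : i ≠ j) (y : Fin n → ℝ) (t : ℝ)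
    (m : ℕ) :
    esymm n m (y + t • (Pi.single i 1 - Pi.single j 1)) =
      esymm n m y +
        (t * (y j - y i) - t ^ 2) * (((univ.erase i).erase j).val.map y).esymmTwoBelow m := by
  set y' := y + t • (Pi.single i 1 - Pi.single j 1)
  have hrest : ((univ.erase i).erase j).val.map y' = ((univ.erase i).erase j).val.map y := by
    refine Multiset.map_congr rfl fun x hx => ?_
    have hx : x ≠ j ∧ x ≠ i := by simpa using Finset.mem_val.mp hx
    simp [y', hx.1, hx.2]
  rw [esymm_eq_esymm_map, esymm_eq_esymm_map, univ_val_map_eq_cons_cons y' hij,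
    univ_val_map_eq_cons_cons y hij, hrest, ← sub_eq_iff_eq_add',
    ← neg_sub, Multiset.esymm_cons_cons_sub _ (by simp [y', hij, hij.symm]; ring)]
  simp [y', hij, hij.symm]
  ring

end EsymmOnFin

section EsymmQuotient

variable {n k l : ℕ} {y : Fin n → ℝ} {i j : Fin n}

theorem hasDerivAt_esymm_add_smul_single_sub_single (hij : i ≠ j) (m : ℕ) :
    HasDerivAt (fun t : ℝ => esymm n m (y + t • (Pi.single i 1 - Pi.single j 1)))
      ((y j - y i) * (((univ.erase i).erase j).val.map y).esymmTwoBelow m) 0 := by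
  simp_rw [esymm_add_smul_single_sub_single hij]
  simpa using (((hasDerivAt_id (0 : ℝ)).mul_const (y j - y i)).sub
    (hasDerivAt_pow 2 (0 : ℝ))).mul_const _ |>.const_add (esymm n m y)

theorem differentiableAt_esymm_div_esymm (hl : esymm n l y ≠ 0) :
    DifferentiableAt ℝ (fun z => esymm n k z / esymm n l z) y := by
  simp only [div_eq_mul_inv]
  exact (differentiable_esymm k y).mul ((differentiable_esymm l y).inv hl)

theorem fderiv_esymm_div_esymm_single_sub_single (hij : i ≠ j) (hl : esymm n l y ≠ 0) :
    fderiv ℝ (fun z => esymm n k z / esymm n l z) y (Pi.single i 1 - Pi.single j 1) =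
      (y j - y i) *
        ((((univ.erase i).erase j).val.map y).esymmTwoBelow k * esymm n l y -
          esymm n k y * (((univ.erase i).erase j).val.map y).esymmTwoBelow l) /
        esymm n l y ^ 2 := by
  have hline : HasLineDerivAt ℝ (fun z => esymm n k z / esymm n l z) _ y
      (Pi.single i 1 - Pi.single j 1) :=
    (hasDerivAt_esymm_add_smul_single_sub_single hij k).fun_div
      (hasDerivAt_esymm_add_smul_single_sub_single hij l) (by simpa using hl)
  rw [((differentiableAt_esymm_div_esymm hl).hasFDerivAt.hasLineDerivAt _).unique hline]
  simp only [zero_smul, add_zero]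
  ring

theorem fderiv_esymm_div_esymm_single_sub_single_nonneg (hy : ∀ m ≤ k, 0 < esymm n m y)
    (hlk : l ≤ k) (hij : y i ≤ y j) :
    0 ≤ fderiv ℝ (fun z => esymm n k z / esymm n l z) y (Pi.single i 1 - Pi.single j 1) := by
  rcases eq_or_ne i j with rfl | hne
  · simp
  rw [fderiv_esymm_div_esymm_single_sub_single hne (hy l hlk).ne']
  simp_rw [esymm_eq_esymm_map, univ_val_map_eq_cons_cons y hne] at hy ⊢
  have key := Multiset.esymm_mul_esymmTwoBelow_le hy hlk
  exact div_nonneg (mul_nonneg (sub_nonneg.2 hij) (by linarith)) (sq_nonneg _)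

end EsymmQuotient

section Eta

variable {n : ℕ}

def etaCLM (n : ℕ) : (Fin n → ℝ) →L[ℝ] Fin n → ℝ :=
  ContinuousLinearMap.pi fun i => ∑ j ∈ univ.erase i, ContinuousLinearMap.proj j

theorem etaCLM_apply (y : Fin n → ℝ) : etaCLM n y = etaVec y := by
  ext i
  simp [etaCLM, etaVec]

theorem etaVec_apply (y : Fin n → ℝ) (i : Fin n) : etaVec y i = ∑ j, y j - y i :=
  sum_erase_eq_sub (mem_univ i)

theorem etaVec_single_sub_single (i j : Fin n) :
    etaVec (Pi.single i 1 - Pi.single j 1 : Fin n → ℝ) = Pi.single j 1 - Pi.single i 1 := by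
  ext r
  simp [etaVec_apply, sum_sub_distrib]

end Eta

theorem statement_16_general (n k l : ℕ) (hlk : l < k)
    (lam : Fin n → ℝ) (hlam : lam ∈ GammaTilde n k)
    (hsort : ∀ i j : Fin n, i ≤ j → lam j ≤ lam i) :
    (∀ i j : Fin n, i ≤ j →
      fderiv ℝ (fun y : Fin n → ℝ => esymm n k y / esymm n l y) (etaVec lam)
          (Pi.single j 1) ≤
        fderiv ℝ (fun y : Fin n → ℝ => esymm n k y / esymm n l y) (etaVec lam)
          (Pi.single i 1)) ∧
    (∀ i j : Fin n, i ≤ j →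
      fderiv ℝ (fun y : Fin n → ℝ => esymm n k (etaVec y) / esymm n l (etaVec y)) lam
          (Pi.single i 1) ≤
        fderiv ℝ (fun y : Fin n → ℝ => esymm n k (etaVec y) / esymm n l (etaVec y)) lam
          (Pi.single j 1)) := by
  have hcone : ∀ m ≤ k, 0 < esymm n m (etaVec lam) := fun m hm => by
    rcases Nat.eq_zero_or_pos m with rfl | hm0
    · simp [esymm_eq_esymm_map]
    · exact hlam m hm0 hm
  have hmono (i j : Fin n) (hij : i ≤ j) : etaVec lam i ≤ etaVec lam j := by
    simp only [etaVec_apply]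
    linarith [hsort i j hij]
  have hnonneg (i j : Fin n) (hij : i ≤ j) :=
    fderiv_esymm_div_esymm_single_sub_single_nonneg hcone hlk.le (hmono i j hij)
  refine ⟨fun i j hij => ?_, fun i j hij => ?_⟩
  · linarith [map_sub (fderiv ℝ (fun z => esymm n k z / esymm n l z) (etaVec lam))
      (Pi.single i 1) (Pi.single j 1), hnonneg i j hij]
  · have hcomp : (fun y => esymm n k (etaVec y) / esymm n l (etaVec y)) =
        (fun z => esymm n k z / esymm n l z) ∘ etaCLM n := by
      ext y
      simp [etaCLM_apply]
    have hdiff := differentiableAt_esymm_div_esymm (k := k) (hcone l hlk.le).ne'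
    rw [← etaCLM_apply] at hdiff
    have h := hnonneg i j hij
    rw [← etaVec_single_sub_single, ← etaCLM_apply (Pi.single j 1 - _), map_sub, map_sub,
      ← etaCLM_apply lam] at h
    rw [hcomp, fderiv_comp _ hdiff (etaCLM n).differentiableAt, (etaCLM n).fderiv,
      ContinuousLinearMap.comp_apply, ContinuousLinearMap.comp_apply]
    linarith

/-- For `0 ≤ l < k ≤ n` and `λ ∈ Γ̃_k` sorted decreasingly (so `η` is sorted
increasingly): the derivatives of `σ_k(η)/σ_l(η)` in the `η`-variables are
nonincreasing in the index, while those in the `λ`-variables are nondecreasing. -/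
theorem statement_16 (n k l : ℕ) (hlk : l < k) (hkn : k ≤ n)
    (lam : Fin n → ℝ) (hlam : lam ∈ GammaTilde n k)
    (hsort : ∀ i j : Fin n, i ≤ j → lam j ≤ lam i) :
    (∀ i j : Fin n, i ≤ j →
      fderiv ℝ (fun y : Fin n → ℝ => esymm n k y / esymm n l y) (etaVec lam)
          (Pi.single j 1) ≤
        fderiv ℝ (fun y : Fin n → ℝ => esymm n k y / esymm n l y) (etaVec lam)
          (Pi.single i 1)) ∧
    (∀ i j : Fin n, i ≤ j →
      fderiv ℝ (fun y : Fin n → ℝ => esymm n k (etaVec y) / esymm n l (etaVec y)) lam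
          (Pi.single i 1) ≤
        fderiv ℝ (fun y : Fin n → ℝ => esymm n k (etaVec y) / esymm n l (etaVec y)) lam
          (Pi.single j 1)) :=
  statement_16_general n k l hlk lam hlam hsort
end

section
/- Let 2 ≤ k ≤ n. There exists a positive constant c₀ depending only on n and k such that for every λ ∈ Γ_k, σ_{k−1}(λ) ≥ c₀ · σ_k(λ)^{1 − 1/(k−1)} · σ_1(λ)^{1/(k−1)}. -/
open Finset MeasureTheory Metric Set Bornology Matrix

/-!
Write `E_i = σ_i / C(n, i)`. Newton's inequalities `E_{i-1} E_{i+1} ≤ E_i²` hold for every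
real vector. By Rolle's theorem the roots of the derivative of `∏ (X - λ_j)` are real, and they
have the same `E_i` for `i < n`; so one differentiates down to `n = i + 1` variables, where the
inequality is Cauchy–Schwarz for the vector `(∏_{j ≠ l} λ_j)_l`. On `Γ_k` the numbers
`E_0, …, E_k` are positive, so the ratios `E_{i+1} / E_i` decrease for `i < k`, and multiplying
`E_k / E_{k-1} ≤ E_{i+1} / E_i` over `1 ≤ i ≤ k - 2` gives `E_k^{k-2} E_1 ≤ E_{k-1}^{k-1}`.
Taking `(k-1)`-th roots yields the theorem.
-/

section Fintype
variable {ι : Type*} [Fintype ι]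

theorem two_mul_esymm_two_eq {R : Type*} [CommRing R] (x : ι → R) :
    2 * (univ.val.map x).esymm 2 = (∑ i, x i) ^ 2 - ∑ i, x i ^ 2 := by
  have h := congrArg (MvPolynomial.aeval x) (MvPolynomial.mul_esymm_eq_sum ι R 2)
  rw [show (antidiagonal 2).filter (fun a => a.1 < 2) = {(0, 2), (1, 1)} by decide,
    sum_pair (by decide), map_mul, map_natCast] at h
  simp only [map_mul, map_add, map_pow, map_neg, map_one, Nat.cast_ofNat, MvPolynomial.psum,
    map_sum, MvPolynomial.aeval_X, MvPolynomial.aeval_esymm_eq_multiset_esymm, esymm_map_val,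
    powersetCard_zero, powersetCard_one, sum_singleton, sum_map, Finset.prod_empty,
    Finset.prod_singleton, Function.Embedding.coeFn_mk, pow_one] at h
  rw [esymm_map_val]
  linear_combination h

theorem esymm_map_univ_one {R : Type*} [CommSemiring R] (x : ι → R) :
    (univ.val.map x).esymm 1 = ∑ i, x i := by
  simp [Finset.esymm_map_val, powersetCard_one]

theorem two_mul_card_mul_esymm_two_le (x : ι → ℝ) :
    2 * Fintype.card ι * (univ.val.map x).esymm 2 ≤
      (Fintype.card ι - 1) * (univ.val.map x).esymm 1 ^ 2 := by
  have hCS : (∑ i, x i) ^ 2 ≤ Fintype.card ι * ∑ i, x i ^ 2 := by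
    simpa using sq_sum_le_card_mul_sum_sq (s := univ) (f := x)
  rw [esymm_map_univ_one]
  linear_combination (Fintype.card ι : ℝ) * two_mul_esymm_two_eq x + hCS

theorem sum_prod_compl_eq_esymm {R : Type*} [CommSemiring R] [DecidableEq ι] (x : ι → R)
    {k : ℕ} (hk : k ≤ Fintype.card ι) :
    ∑ t ∈ powersetCard k univ, ∏ i ∈ tᶜ, x i =
      (univ.val.map x).esymm (Fintype.card ι - k) := by
  rw [Finset.esymm_map_val]
  refine sum_nbij' (fun t => tᶜ) (fun t => tᶜ) ?_ ?_ (fun t _ => compl_compl t)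
    (fun t _ => compl_compl t) (fun t _ => rfl) <;>
  · intro t ht
    simp only [mem_powersetCard_univ, card_compl] at ht ⊢
    omega

theorem esymm_map_univ_card {R : Type*} [CommSemiring R] (x : ι → R) :
    (univ.val.map x).esymm (Fintype.card ι) = ∏ i, x i := by
  rw [Finset.esymm_map_val, ← card_univ, powersetCard_self, sum_singleton]

/-- `two_mul_card_mul_esymm_two_le` applied to `q l = ∏_{i ≠ l} x i`, for which
`σ₁(q) = σ_{m-1}(x)` and `σ₂(q) = σ_m(x) σ_{m-2}(x)`. -/
theorem two_mul_card_mul_esymm_mul_esymm_le (x : ι → ℝ) {j : ℕ}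
    (hj : Fintype.card ι = j + 2) :
    2 * (j + 2) * ((univ.val.map x).esymm j * (univ.val.map x).esymm (j + 2)) ≤
      (j + 1) * (univ.val.map x).esymm (j + 1) ^ 2 := by
  classical
  set q : ι → ℝ := fun i => ∏ l ∈ {i}ᶜ, x l
  have hq1 : (univ.val.map q).esymm 1 = (univ.val.map x).esymm (j + 1) := by
    rw [esymm_map_univ_one, show j + 1 = Fintype.card ι - 1 by omega,
      ← sum_prod_compl_eq_esymm x (by omega), powersetCard_one, sum_map]
    rfl
  have hq2 : (univ.val.map q).esymm 2 =
      (univ.val.map x).esymm (j + 2) * (univ.val.map x).esymm j := by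
    rw [show j = Fintype.card ι - 2 by omega, ← sum_prod_compl_eq_esymm x (by omega), mul_sum,
      Finset.esymm_map_val]
    refine sum_congr rfl fun t ht => ?_
    obtain ⟨a, b, hab, rfl⟩ := card_eq_two.1 (mem_powersetCard_univ.1 ht)
    have hq : ∀ c d, c ≠ d → ∏ l ∈ {c}ᶜ, x l = x d * ∏ l ∈ {c, d}ᶜ, x l := by
      intro c d hcd
      rw [← prod_insert (by simp)]
      congr 1
      ext l
      simp only [Finset.mem_compl, Finset.mem_singleton, Finset.mem_insert]
      grind
    have hprod : ∏ l, x l = x a * x b * ∏ l ∈ {a, b}ᶜ, x l := by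
      rw [← prod_mul_prod_compl {a, b}, prod_pair hab]
    rw [prod_pair hab, hq a b hab, hq b a hab.symm, Finset.pair_comm b a,
      show Fintype.card ι - 2 + 2 = Fintype.card ι by omega, esymm_map_univ_card, hprod]
    ring
  have h := two_mul_card_mul_esymm_two_le q
  rw [hq1, hq2, hj] at h
  push_cast at h
  linarith

end Fintype

namespace Multiset
open Polynomial

/-- Rolle's theorem: the derivative of a polynomial with only real roots has only real roots. -/
theorem exists_derivative_prod_X_sub_C_eq (s : Multiset ℝ) {n : ℕ} (hs : card s = n + 1) :
    ∃ t : Multiset ℝ, card t = n ∧ derivative (s.map fun a => X - C a).prod =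
      C ((n : ℝ) + 1) * (t.map fun a => X - C a).prod := by
  set P := (s.map fun a => X - C a).prod
  have hPdeg : P.natDegree = n + 1 := by rw [natDegree_multiset_prod_X_sub_C_eq_card, hs]
  have hPmonic : P.Monic := monic_multiset_prod_of_monic _ _ fun a _ => monic_X_sub_C a
  have hcoeff : (derivative P).coeff n = n + 1 := by
    rw [coeff_derivative, ← hPdeg, hPmonic.coeff_natDegree]
    ring
  have hdeg : (derivative P).natDegree = n := by
    refine le_antisymm ?_ (le_natDegree_of_ne_zero (by rw [hcoeff]; positivity))
    have := natDegree_derivative_le P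
    omega
  have hroots : card (derivative P).roots = (derivative P).natDegree := by
    refine le_antisymm (card_roots' _) ?_
    have := card_roots_le_derivative P
    rw [roots_multiset_prod_X_sub_C, hs] at this
    omega
  refine ⟨(derivative P).roots, hroots.trans hdeg, ?_⟩
  rw [← hcoeff, ← hdeg]
  exact (C_leadingCoeff_mul_prod_multiset_X_sub_C hroots).symm

theorem mul_esymm_eq_of_derivative_prod_X_sub_C_eq {s t : Multiset ℝ} {n : ℕ}
    (hs : card s = n + 1) (ht : card t = n)
    (h : derivative (s.map fun a => X - C a).prod =
      C ((n : ℝ) + 1) * (t.map fun a => X - C a).prod)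
    {i : ℕ} (hi : i ≤ n) : ((n : ℝ) + 1) * t.esymm i = ((n : ℝ) + 1 - i) * s.esymm i := by
  have hcoeff := congrArg (coeff · (n - i)) h
  simp only [coeff_derivative, coeff_C_mul] at hcoeff
  rw [prod_X_sub_C_coeff s (by omega), prod_X_sub_C_coeff t (by omega), hs, ht,
    show n + 1 - (n - i + 1) = i by omega, show n - (n - i) = i by omega,
    Nat.cast_sub hi] at hcoeff
  refine mul_left_cancel₀ (pow_ne_zero i (by norm_num : (-1 : ℝ) ≠ 0)) ?_
  linear_combination -hcoeff

noncomputable def esymmMean (s : Multiset ℝ) (i : ℕ) : ℝ := s.esymm i / (card s).choose i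

theorem exists_esymmMean_eq (s : Multiset ℝ) {n : ℕ} (hs : card s = n + 1) :
    ∃ t : Multiset ℝ, card t = n ∧ ∀ i ≤ n, t.esymmMean i = s.esymmMean i := by
  obtain ⟨t, ht, hder⟩ := exists_derivative_prod_X_sub_C_eq s hs
  refine ⟨t, ht, fun i hi => ?_⟩
  have hesymm := mul_esymm_eq_of_derivative_prod_X_sub_C_eq hs ht hder hi
  have hchoose := congrArg (Nat.cast : ℕ → ℝ) (Nat.choose_mul_succ_eq n i)
  push_cast [Nat.cast_sub (by omega : i ≤ n + 1)] at hchoose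
  have hpos : ∀ m, i ≤ m → ((m.choose i : ℕ) : ℝ) ≠ 0 := fun m hm => by
    exact_mod_cast (Nat.choose_pos hm).ne'
  rw [esymmMean, esymmMean, ht, hs, div_eq_div_iff (hpos n hi) (hpos (n + 1) (by omega))]
  refine mul_left_cancel₀ (by positivity : (n : ℝ) + 1 ≠ 0) ?_
  linear_combination (((n + 1).choose i : ℕ) : ℝ) * hesymm - s.esymm i * hchoose

theorem esymmMean_mul_esymmMean_le_sq_of_card_eq (s : Multiset ℝ) {j : ℕ}
    (hs : card s = j + 2) :
    s.esymmMean j * s.esymmMean (j + 2) ≤ s.esymmMean (j + 1) ^ 2 := by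
  have h := two_mul_card_mul_esymm_mul_esymm_le (fun x : s => (x : ℝ)) (by rw [card_coe, hs])
  rw [map_univ_coe] at h
  have hc0 : (((j + 2).choose j : ℕ) : ℝ) * 2 = (j + 2) * (j + 1) := by
    rw [Nat.choose_symm_add, Nat.cast_choose_two]
    push_cast
    ring
  have hc1 : (j + 2).choose (j + 1) = j + 2 := Nat.choose_succ_self_right (j + 1)
  have hc0pos : (0 : ℝ) < ((j + 2).choose j : ℕ) := by exact_mod_cast Nat.choose_pos (by omega)
  rw [esymmMean, esymmMean, esymmMean, hs, hc1, Nat.choose_self, Nat.cast_one, div_one,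
    div_mul_eq_mul_div, div_pow, div_le_div_iff₀ hc0pos (by positivity)]
  push_cast
  linear_combination ((j : ℝ) + 2) / 2 * h - s.esymm (j + 1) ^ 2 / 2 * hc0

/-- Newton's inequalities. -/
theorem esymmMean_mul_esymmMean_le_sq (s : Multiset ℝ) {j : ℕ} (hj : j + 2 ≤ card s) :
    s.esymmMean j * s.esymmMean (j + 2) ≤ s.esymmMean (j + 1) ^ 2 := by
  obtain ⟨d, hd⟩ := Nat.exists_eq_add_of_le hj
  induction d generalizing s with
  | zero => exact esymmMean_mul_esymmMean_le_sq_of_card_eq s hd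
  | succ d ih =>
    obtain ⟨t, ht, hmean⟩ := exists_esymmMean_eq s (n := j + 2 + d) (by omega)
    rw [← hmean j (by omega), ← hmean (j + 1) (by omega), ← hmean (j + 2) (by omega)]
    exact ih t (by omega) ht

end Multiset

section LogConcave
variable {a : ℕ → ℝ} {m : ℕ}

theorem mul_le_mul_of_logConcave (hpos : ∀ i ≤ m + 1, 0 < a i)
    (hlc : ∀ i, i + 2 ≤ m + 1 → a i * a (i + 2) ≤ a (i + 1) ^ 2) {j : ℕ} (hj : j ≤ m) :
    a (m + 1) * a j ≤ a m * a (j + 1) := by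
  induction hj using Nat.decreasingInduction with
  | self => rw [mul_comm]
  | of_succ j hj ih =>
    refine le_of_mul_le_mul_right ?_ (hpos (j + 2) (by omega))
    calc a (m + 1) * a j * a (j + 2) = a (m + 1) * (a j * a (j + 2)) := by ring
      _ ≤ a (m + 1) * a (j + 1) ^ 2 :=
        mul_le_mul_of_nonneg_left (hlc j (by omega)) (hpos _ le_rfl).le
      _ = a (m + 1) * a (j + 1) * a (j + 1) := by ring
      _ ≤ a m * a (j + 2) * a (j + 1) :=
        mul_le_mul_of_nonneg_right ih (hpos _ (by omega)).le
      _ = a m * a (j + 1) * a (j + 2) := by ring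

theorem pow_mul_le_pow_mul_of_logConcave (hpos : ∀ i ≤ m + 1, 0 < a i)
    (hlc : ∀ i, i + 2 ≤ m + 1 → a i * a (i + 2) ≤ a (i + 1) ^ 2) {i : ℕ} (hi : i ≤ m) :
    a (m + 1) ^ i * a 1 ≤ a m ^ i * a (i + 1) := by
  induction i with
  | zero => simp
  | succ i ih =>
    calc a (m + 1) ^ (i + 1) * a 1 = a (m + 1) * (a (m + 1) ^ i * a 1) := by ring
      _ ≤ a (m + 1) * (a m ^ i * a (i + 1)) :=
        mul_le_mul_of_nonneg_left (ih (by omega)) (hpos _ le_rfl).le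
      _ = a m ^ i * (a (m + 1) * a (i + 1)) := by ring
      _ ≤ a m ^ i * (a m * a (i + 2)) :=
        mul_le_mul_of_nonneg_left (mul_le_mul_of_logConcave hpos hlc hi)
          (pow_nonneg (hpos m (by omega)).le _)
      _ = a m ^ (i + 1) * a (i + 2) := by ring

end LogConcave

theorem mul_rpow_le_of_pow_mul_le {A B C E : ℝ} {p : ℕ} (hA : 0 ≤ A) (hB : 0 ≤ B)
    (hC : 0 < C) (hE : 0 ≤ E) (h : A ^ p * B ≤ C * E ^ (p + 1)) :
    (C ^ (1 / (p + 1 : ℝ)))⁻¹ * A ^ (1 - 1 / (p + 1 : ℝ)) * B ^ (1 / (p + 1 : ℝ)) ≤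
      E := by
  set r : ℝ := 1 / (p + 1 : ℝ)
  have hr : 0 ≤ r := by positivity
  have hr1 : r * (p + 1) = 1 := one_div_mul_cancel (by positivity)
  have hAr : A ^ (1 - r) = (A ^ p) ^ r := by
    rw [← Real.rpow_natCast, ← Real.rpow_mul hA]
    congr 1
    linear_combination -hr1
  have hEr : (E ^ (p + 1)) ^ r = E := by
    rw [← Real.rpow_natCast, ← Real.rpow_mul hE]
    conv_rhs => rw [← Real.rpow_one E]
    congr 1
    push_cast
    linear_combination hr1
  have hCr : 0 < C ^ r := Real.rpow_pos_of_pos hC r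
  rw [mul_assoc, hAr, ← Real.mul_rpow (by positivity) hB, inv_mul_le_iff₀ hCr]
  calc (A ^ p * B) ^ r ≤ (C * E ^ (p + 1)) ^ r := Real.rpow_le_rpow (by positivity) h hr
    _ = C ^ r * E := by rw [Real.mul_rpow hC.le (by positivity), hEr]

theorem esymm_eq_esymm_map_univ (n k : ℕ) (x : Fin n → ℝ) :
    esymm n k x = (univ.val.map x).esymm k :=
  (Finset.esymm_map_val x univ k).symm

theorem esymmMean_pos_of_mem_gammaCone {n k : ℕ} {x : Fin n → ℝ} (hx : x ∈ GammaCone n k)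
    (hkn : k ≤ n) {i : ℕ} (hi : i ≤ k) : 0 < (univ.val.map x).esymmMean i := by
  have hσ : 0 < (univ.val.map x).esymm i := by
    rcases Nat.eq_zero_or_pos i with rfl | hi0
    · simp [Multiset.esymm]
    · rw [← esymm_eq_esymm_map_univ]
      exact hx i hi0 hi
  have hchoose : (0 : ℝ) < (n.choose i : ℕ) := by exact_mod_cast Nat.choose_pos (by omega)
  rw [Multiset.esymmMean, Multiset.card_map, card_val, card_univ, Fintype.card_fin]
  exact div_pos hσ hchoose

theorem esymm_pow_mul_esymm_one_le {n p : ℕ} (hpn : p + 2 ≤ n) {x : Fin n → ℝ}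
    (hx : x ∈ GammaCone n (p + 2)) :
    esymm n (p + 2) x ^ p * esymm n 1 x ≤
      ((n.choose (p + 2) : ℕ) ^ p * n / (n.choose (p + 1) : ℕ) ^ (p + 1) : ℝ) *
        esymm n (p + 1) x ^ (p + 1) := by
  set a := (univ.val.map x).esymmMean
  have hpos : ∀ i ≤ p + 2, 0 < a i := fun i hi => esymmMean_pos_of_mem_gammaCone hx hpn hi
  have hlc : ∀ i, i + 2 ≤ p + 2 → a i * a (i + 2) ≤ a (i + 1) ^ 2 := fun i hi =>
    Multiset.esymmMean_mul_esymmMean_le_sq _ (by simp; omega)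
  have h := pow_mul_le_pow_mul_of_logConcave (m := p + 1) hpos hlc (i := p) (by omega)
  have ha : ∀ i, a i = esymm n i x / n.choose i := fun i => by
    simp [a, Multiset.esymmMean, esymm_eq_esymm_map_univ]
  have hk : (0 : ℝ) < (n.choose (p + 2) : ℕ) := by exact_mod_cast Nat.choose_pos hpn
  have hk' : (0 : ℝ) < (n.choose (p + 1) : ℕ) := by exact_mod_cast Nat.choose_pos (by omega)
  have hn : (0 : ℝ) < n := by exact_mod_cast (by omega : 0 < n)
  rw [ha, ha, ha, ← pow_succ, div_pow, div_pow, Nat.choose_one_right, div_mul_div_comm,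
    div_le_div_iff₀ (by positivity) (by positivity)] at h
  rw [div_mul_eq_mul_div, le_div_iff₀ (by positivity)]
  linear_combination h

/-- For `2 ≤ k ≤ n` there is a constant `c₀ > 0` depending only on `n` and `k`
such that `σ_{k−1}(λ) ≥ c₀ σ_k(λ)^{1−1/(k−1)} σ_1(λ)^{1/(k−1)}` for all `λ ∈ Γ_k`. -/
theorem statement_19 (n k : ℕ) (hk2 : 2 ≤ k) (hkn : k ≤ n) :
    ∃ c₀ : ℝ, 0 < c₀ ∧ ∀ lam : Fin n → ℝ, lam ∈ GammaCone n k →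
      c₀ * esymm n k lam ^ ((1 : ℝ) - 1 / ((k : ℝ) - 1)) *
          esymm n 1 lam ^ ((1 : ℝ) / ((k : ℝ) - 1)) ≤
        esymm n (k - 1) lam := by
  obtain ⟨p, rfl⟩ : ∃ p, k = p + 2 := ⟨k - 2, by omega⟩
  set C : ℝ := (n.choose (p + 2) : ℕ) ^ p * n / (n.choose (p + 1) : ℕ) ^ (p + 1)
  have hC : 0 < C := by
    have : (0 : ℝ) < (n.choose (p + 2) : ℕ) := by exact_mod_cast Nat.choose_pos hkn
    have : (0 : ℝ) < (n.choose (p + 1) : ℕ) := by exact_mod_cast Nat.choose_pos (by omega)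
    have : (0 : ℝ) < n := by exact_mod_cast (by omega : 0 < n)
    positivity
  refine ⟨(C ^ (1 / (p + 1 : ℝ)))⁻¹, by positivity, fun x hx => ?_⟩
  rw [show ((p + 2 : ℕ) : ℝ) - 1 = p + 1 by push_cast; ring]
  exact mul_rpow_le_of_pow_mul_le (hx _ (by omega) le_rfl).le (hx 1 le_rfl (by omega)).le hC
    (hx (p + 1) (by omega) (by omega)).le (esymm_pow_mul_esymm_one_le hkn hx)
end
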